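/- Let -2 < m < -1 and γ ≥ 0. Then the problem f''' + (m+2) f f'' - (2m+1)(f')^2 = 0 on [0,∞) with f(0) = -γ, f''(0) = -1, f'(∞) = 0 has no solution. -/

import Mathlib

/-!
Along a solution, `φ = f'' + (m + 2) f f'` satisfies `φ' = 3 (m + 1) f'² ≤ 0`, so
`φ ≤ φ(0) = -1 - (m + 2) γ f'(0)` on `[0, ∞)`.

If `f'(0) ≥ 0`, then `φ ≤ -1`; since `φ` is the derivative of `f' + (m + 2) f² / 2 ≥ f'`, this
function decreases at least linearly, which is incompatible with `f' → 0`.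

If `f'(0) < 0`, let `t₁` be the first time at which `f'` reaches `f'(0) / 2`. Before `t₁` the
function `f` decreases, so `f ≤ -γ`, and then `f'' ≤ -1` wherever `f' = f'(0)`. The barrier
`f'(0)` is therefore never crossed on `[0, t₁]`, contradicting `f'(t₁) ≥ f'(0) / 2`.
-/

open Filter Set Topology

theorem ContDiff.hasDerivAt_iteratedDeriv {f : ℝ → ℝ} {n : ℕ} (hf : ContDiff ℝ n f) {k : ℕ}
    (hk : k < n) (t : ℝ) : HasDerivAt (iteratedDeriv k f) (iteratedDeriv (k + 1) f t) t := by
  rw [iteratedDeriv_succ]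
  exact (hf.differentiable_iteratedDeriv k (mod_cast hk) t).hasDerivAt

theorem Continuous.exists_first_ge {g : ℝ → ℝ} (hg : Continuous g) {a b T : ℝ} (hbT : b ≤ T)
    (hT : a ≤ g T) : ∃ t ≥ b, a ≤ g t ∧ ∀ s ∈ Ico b t, g s < a := by
  set S := {t | b ≤ t ∧ a ≤ g t}
  have hS : IsClosed S := isClosed_Ici.inter (isClosed_le continuous_const hg)
  have hbdd : BddBelow S := ⟨b, fun _ ht => ht.1⟩
  obtain ⟨hb, ha⟩ := hS.csInf_mem ⟨T, hbT, hT⟩ hbdd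
  refine ⟨sInf S, hb, ha, fun s hs => ?_⟩
  by_contra! hgs
  exact (csInf_le hbdd ⟨hs.1, hgs⟩).not_gt hs.2

section

variable {m γ : ℝ} {f f' f'' f''' : ℝ → ℝ}

theorem antitoneOn_deriv2_add_mul_deriv (hm : m < -1) (hf : ∀ t, HasDerivAt f (f' t) t)
    (hf' : ∀ t, HasDerivAt f' (f'' t) t) (hf'' : ∀ t, HasDerivAt f'' (f''' t) t)
    (hode : ∀ t ≥ (0:ℝ), f''' t + (m + 2) * f t * f'' t - (2 * m + 1) * f' t ^ 2 = 0) :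
    AntitoneOn (fun t => f'' t + (m + 2) * f t * f' t) (Ici 0) := by
  have hφ : ∀ t, HasDerivAt (fun t => f'' t + (m + 2) * f t * f' t)
      (f''' t + (m + 2) * (f' t * f' t + f t * f'' t)) t := fun t =>
    ((hf'' t).add (((hf t).const_mul (m + 2)).mul (hf' t))).congr_deriv (by ring)
  refine antitoneOn_of_deriv_nonpos (convex_Ici 0)
    (fun t _ => (hφ t).continuousAt.continuousWithinAt)
    (fun t _ => (hφ t).differentiableAt.differentiableWithinAt) fun t ht => ?_
  rw [interior_Ici] at ht
  -- along solutions the derivative is `3 (m + 1) f'²`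
  rw [(hφ t).deriv]
  nlinarith [hode t ht.le, sq_nonneg (f' t)]

theorem not_tendsto_deriv_of_deriv_zero_nonneg (hm : -2 < m) (hγ : 0 ≤ γ)
    (hf : ∀ t, HasDerivAt f (f' t) t) (hf' : ∀ t, HasDerivAt f' (f'' t) t)
    (hφ : ∀ t ≥ (0:ℝ), f'' t + (m + 2) * f t * f' t ≤ -1 - (m + 2) * γ * f' 0)
    (h0 : 0 ≤ f' 0) : ¬ Tendsto f' atTop (𝓝 0) := by
  intro hlim
  set h := fun t => f' t + (m + 2) * f t ^ 2 / 2
  have hh : ∀ t, HasDerivAt h (f'' t + (m + 2) * f t * f' t) t := fun t =>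
    ((hf' t).add ((((hf t).pow 2).const_mul (m + 2)).div_const 2)).congr_deriv (by ring)
  have hh_le : ∀ t ≥ (0:ℝ), h t - h 0 ≤ -1 * (t - 0) := by
    refine fun t ht => (convex_Ici 0).image_sub_le_mul_sub_of_deriv_le
      (fun t _ => (hh t).continuousAt.continuousWithinAt)
      (fun t _ => (hh t).differentiableAt.differentiableWithinAt) (fun s hs => ?_) 0
      self_mem_Ici t ht ht
    rw [interior_Ici] at hs
    rw [(hh s).deriv]
    nlinarith [hφ s hs.le, mul_nonneg (mul_nonneg (by linarith : (0:ℝ) ≤ m + 2) hγ) h0]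
  obtain ⟨t, ht, hft⟩ := ((eventually_ge_atTop (max 0 (h 0 + 1))).and
    (hlim.eventually (eventually_gt_nhds (by norm_num : (-1:ℝ) < 0)))).exists
  have hht : h t ≤ -1 := by linarith [hh_le t (le_of_max_le_left ht), le_of_max_le_right ht]
  have hf'h : f' t ≤ h t := le_add_of_nonneg_right (by nlinarith [sq_nonneg (f t)])
  linarith

theorem deriv_le_deriv_zero_of_le_neg {T : ℝ} (hm : -2 < m) (hf' : ∀ t, HasDerivAt f' (f'' t) t)
    (hφ : ∀ t ∈ Ico 0 T, f'' t + (m + 2) * f t * f' t ≤ -1 - (m + 2) * γ * f' 0)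
    (h0 : f' 0 ≤ 0) (hfγ : ∀ t ∈ Ico 0 T, f t ≤ -γ) : ∀ t ∈ Icc 0 T, f' t ≤ f' 0 := by
  refine image_le_of_deriv_right_lt_deriv_boundary'
    (fun t _ => (hf' t).continuousAt.continuousWithinAt) (fun t _ => (hf' t).hasDerivWithinAt)
    le_rfl continuousOn_const (fun t _ => hasDerivWithinAt_const t _ (f' 0)) fun t ht ht0 => ?_
  -- at a touching point `f'' t ≤ -1 - (m + 2) f'(0) (f t + γ) ≤ -1`
  have := hφ t ht
  rw [ht0] at this
  nlinarith [mul_nonneg_of_nonpos_of_nonpos (mul_nonpos_of_nonneg_of_nonpos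
    (by linarith : (0:ℝ) ≤ m + 2) h0) (by linarith [hfγ t ht] : f t + γ ≤ 0)]

theorem not_tendsto_deriv_of_deriv_zero_neg (hm : -2 < m) (hf : ∀ t, HasDerivAt f (f' t) t)
    (hf' : ∀ t, HasDerivAt f' (f'' t) t)
    (hφ : ∀ t ≥ (0:ℝ), f'' t + (m + 2) * f t * f' t ≤ -1 - (m + 2) * γ * f' 0)
    (hf0 : f 0 = -γ) (h0 : f' 0 < 0) : ¬ Tendsto f' atTop (𝓝 0) := by
  intro hlim
  obtain ⟨T, hT0, hT⟩ := ((eventually_ge_atTop 0).and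
    (hlim.eventually (eventually_gt_nhds (by linarith : f' 0 / 2 < 0)))).exists
  obtain ⟨t₁, ht₁, hge, hlt⟩ :=
    (continuous_iff_continuousAt.2 fun t => (hf' t).continuousAt).exists_first_ge hT0 hT.le
  have hanti : AntitoneOn f (Icc 0 t₁) := by
    refine antitoneOn_of_deriv_nonpos (convex_Icc 0 t₁)
      (fun t _ => (hf t).continuousAt.continuousWithinAt)
      (fun t _ => (hf t).differentiableAt.differentiableWithinAt) fun t ht => ?_
    rw [interior_Icc] at ht
    rw [(hf t).deriv]
    linarith [hlt t (Ioo_subset_Ico_self ht)]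
  have hfγ : ∀ t ∈ Ico 0 t₁, f t ≤ -γ := fun t ht =>
    hf0 ▸ hanti (left_mem_Icc.2 ht₁) (Ico_subset_Icc_self ht) ht.1
  have := deriv_le_deriv_zero_of_le_neg hm hf' (fun t ht => hφ t ht.1) h0.le hfγ t₁
    (right_mem_Icc.2 ht₁)
  linarith

end

theorem stmt_11 (m γ : ℝ) (hm₁ : -2 < m) (hm₂ : m < -1) (hγ : γ ≥ 0) :
    ¬ ∃ f : ℝ → ℝ, ContDiff ℝ 3 f ∧
      (∀ t ≥ (0:ℝ), iteratedDeriv 3 f t + (m + 2) * f t * iteratedDeriv 2 f t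
        - (2 * m + 1) * (deriv f t) ^ 2 = 0) ∧
      f 0 = -γ ∧ iteratedDeriv 2 f 0 = -1 ∧
      Filter.Tendsto (deriv f) Filter.atTop (nhds 0) := by
  rintro ⟨f, hf, hode, hf0, hf''0, hlim⟩
  rw [← iteratedDeriv_one] at hode hlim
  have hf₁ : ∀ t, HasDerivAt f (iteratedDeriv 1 f t) t := by
    simpa using hf.hasDerivAt_iteratedDeriv (k := 0) (by norm_num)
  have hf₂ : ∀ t, HasDerivAt (iteratedDeriv 1 f) (iteratedDeriv 2 f t) t :=
    hf.hasDerivAt_iteratedDeriv (k := 1) (by norm_num)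
  have hf₃ : ∀ t, HasDerivAt (iteratedDeriv 2 f) (iteratedDeriv 3 f t) t :=
    hf.hasDerivAt_iteratedDeriv (k := 2) (by norm_num)
  have hanti := antitoneOn_deriv2_add_mul_deriv hm₂ hf₁ hf₂ hf₃ hode
  have hφ : ∀ t ≥ (0:ℝ), iteratedDeriv 2 f t + (m + 2) * f t * iteratedDeriv 1 f t ≤
      -1 - (m + 2) * γ * iteratedDeriv 1 f 0 := fun t ht => by
    have := hanti self_mem_Ici ht ht
    simp only [hf0, hf''0] at this
    linarith
  rcases lt_or_ge (iteratedDeriv 1 f 0) 0 with h0 | h0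
  · exact not_tendsto_deriv_of_deriv_zero_neg hm₁ hf₁ hf₂ hφ hf0 h0 hlim
  · exact not_tendsto_deriv_of_deriv_zero_nonneg hm₁ hγ hf₁ hf₂ hφ h0 hlim
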